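/- The function x ↦ ln Γ(1+3x) − ln Γ(1+x) − 2x·ln x is strictly increasing on (0,∞). Equivalently, the function p ↦ (Γ(1+1/p)/Γ(1+3/p))·p^{−2/p} is increasing in p on (0,∞). -/

import Mathlib

open Real Filter Finset Nat Topology

-- key algebraic inequality
lemma key_ineq {a : ℝ} (ha : 0 < a) :
    1/(a+1/3)^2 + 1/(a+2/3)^2 ≤ 2/a - 2/(a+1) := by
  have h1 : (0:ℝ) < a + 1/3 := by linarith
  have h2 : (0:ℝ) < a + 2/3 := by linarith
  have h3 : (0:ℝ) < a + 1 := by linarith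
  have key : 1/(a+1/3)^2 + 1/(a+2/3)^2 ≤ 2/(a*(a+1)) := by
    rw [div_add_div _ _ (by positivity) (by positivity),
      div_le_div_iff₀ (by positivity) (by positivity)]
    nlinarith [sq_nonneg a, mul_pos ha h3]
  have : 2/(a*(a+1)) = 2/a - 2/(a+1) := by
    field_simp
    ring
  linarith [key, this.le]

-- telescoping sum bound
lemma sum_pair_bound {x : ℝ} (hx : 0 < x) (N : ℕ) :
    ∑ i ∈ range N, (1/(x+i+1/3)^2 + 1/(x+i+2/3)^2) ≤ 2/x - 2/(x+N) := by
  induction N with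
  | zero => simp
  | succ N ih =>
    rw [Finset.sum_range_succ]
    have hxN : (0:ℝ) < x + N := by positivity
    have := key_ineq hxN
    have e1 : ((N+1 : ℕ) : ℝ) = (N : ℝ) + 1 := by push_cast; ring
    rw [e1]
    have : 1/(x+N+1/3)^2 + 1/(x+N+2/3)^2 ≤ 2/(x+N) - 2/(x+(N+1)) := by
      have := key_ineq hxN
      have e : x + (N:ℝ) + 1 = x + ((N:ℝ)+1) := by ring
      rw [e] at this
      exact this
    linarith

-- regrouping the sum of 9/(1+3x+j)^2 into chunks of 3
lemma sum_regroup {x : ℝ} (hx : 0 < x) (N : ℕ) :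
    ∑ j ∈ range (3*N), (9/(1+3*x+j)^2 : ℝ) =
      ∑ i ∈ range N, (1/(x+i+1/3)^2 + 1/(x+i+2/3)^2 + 1/(1+x+i)^2) := by
  induction N with
  | zero => simp
  | succ N ih =>
    have e : 3*(N+1) = (3*N)+1+1+1 := by ring
    rw [e, Finset.sum_range_succ, Finset.sum_range_succ, Finset.sum_range_succ,
      Finset.sum_range_succ, ih]
    have hx1 : (0:ℝ) < x + N + 1/3 := by positivity
    have hx2 : (0:ℝ) < x + N + 2/3 := by positivity
    have hx3 : (0:ℝ) < 1 + x + N := by positivity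
    have c1 : ((3*N : ℕ) : ℝ) = 3*(N:ℝ) := by push_cast; ring
    have c2 : ((3*N+1 : ℕ) : ℝ) = 3*(N:ℝ)+1 := by push_cast; ring
    have c3 : ((3*N+1+1 : ℕ) : ℝ) = 3*(N:ℝ)+2 := by push_cast; ring
    rw [c2, c3]
    rw [show ((3*N:ℕ):ℝ) = 3*(N:ℝ) from c1]
    have t1 : (9:ℝ)/(1+3*x+3*N)^2 = 1/(x+N+1/3)^2 := by
      rw [div_eq_div_iff (by positivity) (by positivity)]; ring
    have t2 : (9:ℝ)/(1+3*x+(3*N+1))^2 = 1/(x+N+2/3)^2 := by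
      rw [div_eq_div_iff (by positivity) (by positivity)]; ring
    have t3 : (9:ℝ)/(1+3*x+(3*N+2))^2 = 1/(1+x+N)^2 := by
      rw [div_eq_div_iff (by positivity) (by positivity)]; ring
    rw [t1]
    rw [show 1+3*x+(3*(N:ℝ)+1) = 1+3*x+(3*N+1) from by ring,
        show 1+3*x+(3*(N:ℝ)+2) = 1+3*x+(3*N+2) from by ring, t2, t3]
    ring

lemma M2_nonpos {x : ℝ} (hx : 0 < x) (N : ℕ) :
    ∑ j ∈ range (3*N), ((9/(1+3*x+j)^2 : ℝ) - 1/(1+x+j)^2) - 2/x ≤ 0 := by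
  rw [Finset.sum_sub_distrib, sum_regroup hx]
  have split : ∑ i ∈ range N, ((1/(x+i+1/3)^2 : ℝ) + 1/(x+i+2/3)^2 + 1/(1+x+i)^2)
      = ∑ i ∈ range N, ((1/(x+i+1/3)^2 : ℝ) + 1/(x+i+2/3)^2)
        + ∑ i ∈ range N, (1/(1+x+i)^2 : ℝ) := by
    rw [← Finset.sum_add_distrib]
  rw [split]
  have h1 := sum_pair_bound hx N
  have h2 : ∑ i ∈ range N, (1/(1+x+i)^2 : ℝ) ≤ ∑ j ∈ range (3*N), (1/(1+x+j)^2 : ℝ) := by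
    apply Finset.sum_le_sum_of_subset_of_nonneg
    · exact Finset.range_subset_range.mpr (by omega)
    · intro i _ _; positivity
  have h3 : (0:ℝ) ≤ 2/(x+N) := by positivity
  linarith

noncomputable def Mf (m : ℕ) (x : ℝ) : ℝ :=
  ∑ j ∈ range m, (Real.log (1+x+j) - Real.log (1+3*x+j)) - 2*x*Real.log x

noncomputable def M1f (m : ℕ) (x : ℝ) : ℝ :=
  ∑ j ∈ range m, (1/(1+x+j) - 3/(1+3*x+j)) - 2*(Real.log x + 1)

noncomputable def M2f (m : ℕ) (x : ℝ) : ℝ :=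
  ∑ j ∈ range m, ((9/(1+3*x+j)^2 : ℝ) - 1/(1+x+j)^2) - 2/x

lemma aux_deriv1 (j : ℕ) {x : ℝ} (hx : 0 < x) :
    HasDerivAt (fun y : ℝ => 1+y+(j:ℝ)) 1 x :=
  ((hasDerivAt_id x).const_add 1).add_const (j:ℝ)

lemma aux_deriv2 (j : ℕ) {x : ℝ} (hx : 0 < x) :
    HasDerivAt (fun y : ℝ => 1+3*y+(j:ℝ)) 3 x := by
  have h := (((hasDerivAt_id x).const_mul 3).const_add 1).add_const (j:ℝ)
  simpa using h

lemma Mf_hasDeriv (m : ℕ) {x : ℝ} (hx : 0 < x) :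
    HasDerivAt (Mf m) (M1f m x) x := by
  have hsum : HasDerivAt (fun y : ℝ => ∑ j ∈ range m, (Real.log (1+y+j) - Real.log (1+3*y+j)))
      (∑ j ∈ range m, ((1/(1+x+j) : ℝ) - 3/(1+3*x+j))) x := by
    apply HasDerivAt.fun_sum
    intro j _
    have hp1 : (0:ℝ) < 1+x+j := by positivity
    have hp2 : (0:ℝ) < 1+3*x+j := by positivity
    have hl1 := (aux_deriv1 j hx).log hp1.ne'
    have hl2 := (aux_deriv2 j hx).log hp2.ne'
    have hl12 : HasDerivAt (fun y : ℝ => Real.log (1+y+(j:ℝ)) - Real.log (1+3*y+(j:ℝ))) _ x := hl1.sub hl2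
    simpa using hl12
  have hml := (Real.hasDerivAt_mul_log hx.ne').const_mul 2
  have h : HasDerivAt (fun y : ℝ => ∑ j ∈ range m, (Real.log (1+y+j) - Real.log (1+3*y+j)) - 2*(y*Real.log y)) _ x := hsum.sub hml
  have e1 : (fun y : ℝ => ∑ j ∈ range m, (Real.log (1+y+j) - Real.log (1+3*y+j)) - 2*(y*Real.log y))
      = Mf m := by
    funext y; simp only [Mf]; ring
  rw [e1] at h
  have e2 : ∑ j ∈ range m, ((1/(1+x+j) : ℝ) - 3/(1+3*x+j)) - 2*(Real.log x + 1) = M1f m x := rfl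
  rw [e2] at h
  exact h

lemma M1f_hasDeriv (m : ℕ) {x : ℝ} (hx : 0 < x) :
    HasDerivAt (M1f m) (M2f m x) x := by
  have hsum : HasDerivAt (fun y : ℝ => ∑ j ∈ range m, ((1/(1+y+j) : ℝ) - 3/(1+3*y+j)))
      (∑ j ∈ range m, ((9/(1+3*x+j)^2 : ℝ) - 1/(1+x+j)^2)) x := by
    apply HasDerivAt.fun_sum
    intro j _
    have hp1 : (0:ℝ) < 1+x+j := by positivity
    have hp2 : (0:ℝ) < 1+3*x+j := by positivity
    have hi1 := (aux_deriv1 j hx).inv hp1.ne'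
    have hi2 := ((aux_deriv2 j hx).inv hp2.ne').const_mul 3
    have h : HasDerivAt (fun y : ℝ => (1+y+(j:ℝ))⁻¹ - 3*(1+3*y+(j:ℝ))⁻¹) _ x := hi1.sub hi2
    have e : (fun y : ℝ => (1+y+(j:ℝ))⁻¹ - 3*(1+3*y+(j:ℝ))⁻¹)
        = (fun y : ℝ => 1/(1+y+(j:ℝ)) - 3/(1+3*y+(j:ℝ))) := by
      funext y; rw [one_div, div_eq_mul_inv]
    rw [e] at h
    have e2 : -1/(1+x+(j:ℝ))^2 - 3*(-3/(1+3*x+(j:ℝ))^2)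
        = (9/(1+3*x+(j:ℝ))^2 : ℝ) - 1/(1+x+(j:ℝ))^2 := by ring
    rw [e2] at h
    exact h
  have hlog : HasDerivAt (fun y : ℝ => 2*(Real.log y + 1)) (2*x⁻¹) x :=
    ((Real.hasDerivAt_log hx.ne').add_const 1).const_mul 2
  have h := hsum.sub hlog
  have e3 : ∑ j ∈ range m, ((9/(1+3*x+j)^2 : ℝ) - 1/(1+x+j)^2) - 2*x⁻¹ = M2f m x := by
    simp only [M2f]; rw [div_eq_mul_inv]
  rw [e3] at h
  exact h

noncomputable def Kf (N : ℕ) (x : ℝ) : ℝ :=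
  2*Real.log ((3*N-1 : ℕ) : ℝ) * x + Mf (3*N) x

lemma Kf_concave (N : ℕ) : ConcaveOn ℝ (Set.Ioi (0:ℝ)) (Kf N) := by
  have hint : interior (Set.Ioi (0:ℝ)) = Set.Ioi 0 := interior_Ioi
  have hd1 : ∀ x ∈ Set.Ioi (0:ℝ), HasDerivAt (Kf N)
      (2*Real.log ((3*N-1 : ℕ) : ℝ) + M1f (3*N) x) x := by
    intro x hx
    have hlin : HasDerivAt (fun y : ℝ => 2*Real.log ((3*N-1 : ℕ) : ℝ) * y)
        (2*Real.log ((3*N-1 : ℕ) : ℝ)) x := by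
      simpa using (hasDerivAt_id x).const_mul (2*Real.log ((3*N-1 : ℕ) : ℝ))
    exact hlin.add (Mf_hasDeriv (3*N) hx)
  have hd2 : ∀ x ∈ Set.Ioi (0:ℝ), HasDerivAt
      (fun x => 2*Real.log ((3*N-1 : ℕ) : ℝ) + M1f (3*N) x) (M2f (3*N) x) x := by
    intro x hx
    exact (M1f_hasDeriv (3*N) hx).const_add _
  apply concaveOn_of_hasDerivWithinAt2_nonpos (convex_Ioi 0)
    (f' := fun x => 2*Real.log ((3*N-1 : ℕ) : ℝ) + M1f (3*N) x) (f'' := fun x => M2f (3*N) x)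
  · intro x hx
    exact (hd1 x hx).continuousAt.continuousWithinAt
  · rw [hint]; intro x hx; exact (hd1 x hx).hasDerivWithinAt
  · rw [hint]; intro x hx; exact (hd2 x hx).hasDerivWithinAt
  · rw [hint]; intro x hx
    exact M2_nonpos hx N

lemma log_GammaSeq {s : ℝ} (hs : 0 < s) {n : ℕ} (hn : 0 < n) :
    Real.log (Real.GammaSeq s n) =
      s * Real.log n + Real.log (n !) - ∑ j ∈ range (n+1), Real.log (s + j) := by
  have hn' : (0:ℝ) < n := by exact_mod_cast hn
  have hterm : ∀ j ∈ range (n+1), (0:ℝ) < s + j := by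
    intro j _; positivity
  have hprod : (0:ℝ) < ∏ j ∈ range (n+1), (s + j) := Finset.prod_pos hterm
  have hfac : (0:ℝ) < (n ! : ℝ) := by exact_mod_cast Nat.factorial_pos n
  have hpow : (0:ℝ) < (n:ℝ) ^ s := Real.rpow_pos_of_pos hn' s
  rw [Real.GammaSeq, Real.log_div (by positivity) hprod.ne', Real.log_mul hpow.ne' hfac.ne',
    Real.log_rpow hn', Real.log_prod (fun j hj => (hterm j hj).ne')]

noncomputable def Ff (x : ℝ) : ℝ :=
  Real.log (Real.Gamma (1 + 3 * x)) - Real.log (Real.Gamma (1 + x)) - 2 * x * Real.log x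

lemma Kf_eq {x : ℝ} (hx : 0 < x) {N : ℕ} (hN : 1 ≤ N) :
    Kf N x = Real.log (Real.GammaSeq (1+3*x) (3*N-1))
      - Real.log (Real.GammaSeq (1+x) (3*N-1)) - 2*x*Real.log x := by
  have hn : 0 < 3*N-1 := by omega
  have hn1 : 3*N-1+1 = 3*N := by omega
  rw [log_GammaSeq (by linarith) hn, log_GammaSeq (by linarith) hn, hn1]
  have hsplit : ∑ j ∈ range (3*N), Real.log (1+3*x + j) - ∑ j ∈ range (3*N), Real.log (1+x + j)
      = - ∑ j ∈ range (3*N), (Real.log (1+x+j) - Real.log (1+3*x+j)) := by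
    rw [Finset.sum_sub_distrib]; ring
  simp only [Kf, Mf]
  have : ∀ j : ℕ, Real.log (1+3*x + (j:ℝ)) = Real.log (1+3*x+(j:ℝ)) := fun _ => rfl
  ring_nf
  rw [Finset.sum_sub_distrib] at *
  ring_nf

lemma Kf_tendsto {x : ℝ} (hx : 0 < x) :
    Tendsto (fun N => Kf N x) atTop (𝓝 (Ff x)) := by
  have h3 : Tendsto (fun N : ℕ => 3*N-1) atTop atTop :=
    Filter.tendsto_atTop_atTop.mpr (fun b => ⟨b+1, fun a ha => by omega⟩)
  have hg1 : Tendsto (fun N : ℕ => Real.GammaSeq (1+3*x) (3*N-1)) atTop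
      (𝓝 (Real.Gamma (1+3*x))) := (Real.GammaSeq_tendsto_Gamma (1+3*x)).comp h3
  have hg2 : Tendsto (fun N : ℕ => Real.GammaSeq (1+x) (3*N-1)) atTop
      (𝓝 (Real.Gamma (1+x))) := (Real.GammaSeq_tendsto_Gamma (1+x)).comp h3
  have hp1 : (0:ℝ) < Real.Gamma (1+3*x) := Real.Gamma_pos_of_pos (by linarith)
  have hp2 : (0:ℝ) < Real.Gamma (1+x) := Real.Gamma_pos_of_pos (by linarith)
  have hl1 := ((Real.continuousAt_log hp1.ne').tendsto).comp hg1
  have hl2 := ((Real.continuousAt_log hp2.ne').tendsto).comp hg2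
  have hmain := (hl1.sub hl2).sub (tendsto_const_nhds (x := 2*x*Real.log x))
  apply hmain.congr'
  filter_upwards [Filter.eventually_ge_atTop 1] with N hN
  exact (Kf_eq hx hN).symm

lemma Ff_concave : ConcaveOn ℝ (Set.Ioi (0:ℝ)) Ff := by
  refine ⟨convex_Ioi 0, ?_⟩
  intro x hx y hy a b ha hb hab
  simp only [Set.mem_Ioi] at hx hy
  have hmem : (0:ℝ) < a • x + b • y := by
    simp only [smul_eq_mul]
    rcases lt_or_ge 0 a with h | h
    · have : 0 < a * x := mul_pos h hx
      nlinarith [mul_nonneg hb hy.le]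
    · have ha0 : a = 0 := le_antisymm h ha
      have hb1 : b = 1 := by linarith
      simp [ha0, hb1, hy]
  have hL : Tendsto (fun N => a • Kf N x + b • Kf N y) atTop (𝓝 (a • Ff x + b • Ff y)) :=
    ((Kf_tendsto hx).const_smul a).add ((Kf_tendsto hy).const_smul b)
  have hR : Tendsto (fun N => Kf N (a • x + b • y)) atTop (𝓝 (Ff (a • x + b • y))) :=
    Kf_tendsto hmem
  exact le_of_tendsto_of_tendsto' hL hR
    (fun N => (Kf_concave N).2 hx hy ha hb hab)

lemma fact_prod (n : ℕ) : ∀ k, (n+k)! = n ! * ∏ i ∈ range k, (n+1+i) := by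
  intro k
  induction k with
  | zero => simp
  | succ k ih =>
    rw [show n+(k+1) = (n+k)+1 from rfl, Nat.factorial_succ, ih, Finset.prod_range_succ]
    ring

lemma fact_bound (n : ℕ) : 2^n * n^(2*n) * n ! ≤ (3*n)! := by
  have h1 : (3*n)! = n ! * ∏ i ∈ range (2*n), (n+1+i) := by
    rw [show 3*n = n + 2*n by omega, fact_prod]
  have h2 : ∏ i ∈ range (2*n), (if i < n then n else 2*n) ≤ ∏ i ∈ range (2*n), (n+1+i) :=
    Finset.prod_le_prod' fun i hi => by split <;> omega
  have h3 : ∏ i ∈ range (2*n), (if i < n then n else 2*n) = 2^n * n^(2*n) := by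
    have hr : range (2*n) = range (n+n) := by rw [two_mul]
    rw [hr, Finset.prod_range_add]
    have e1 : ∏ i ∈ range n, (if i < n then n else 2*n) = n^n := by
      have hc : ∀ i ∈ range n, (if i < n then n else 2*n) = n := by
        intro i hi; simp [Finset.mem_range.mp hi]
      rw [Finset.prod_congr rfl hc, Finset.prod_const, Finset.card_range]
    have e2 : ∏ i ∈ range n, (if n + i < n then n else 2*n) = (2*n)^n := by
      have hc : ∀ i ∈ range n, (if n + i < n then n else 2*n) = 2*n := by
        intro i _; simp
      rw [Finset.prod_congr rfl hc, Finset.prod_const, Finset.card_range]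
    rw [e1, e2, mul_pow, show 2*n = n+n from two_mul n, pow_add]
    ring
  calc 2^n * n^(2*n) * n ! = n ! * (2^n * n^(2*n)) := by ring
    _ ≤ n ! * ∏ i ∈ range (2*n), (n+1+i) := by
        rw [← h3]; exact Nat.mul_le_mul_left _ h2
    _ = (3*n)! := h1.symm

lemma Ff_at_nat {n : ℕ} (hn : 1 ≤ n) : (n:ℝ) * Real.log 2 ≤ Ff n := by
  have e1 : (1:ℝ) + 3*(n:ℝ) = ((3*n : ℕ) : ℝ) + 1 := by push_cast; ring
  have e2 : (1:ℝ) + (n:ℝ) = ((n : ℕ) : ℝ) + 1 := by push_cast; ring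
  unfold Ff
  rw [e1, e2, Real.Gamma_nat_eq_factorial, Real.Gamma_nat_eq_factorial]
  have hn' : (0:ℝ) < (n:ℝ) := by exact_mod_cast hn
  have hb : ((2^n * n^(2*n) * n ! : ℕ) : ℝ) ≤ (((3*n)! : ℕ) : ℝ) := by
    exact_mod_cast fact_bound n
  have hpos : (0:ℝ) < ((2^n * n^(2*n) * n ! : ℕ) : ℝ) := by
    have : 0 < 2^n * n^(2*n) * n ! := by positivity
    exact_mod_cast this
  have hlog := Real.log_le_log hpos hb
  have hfacpos : (0:ℝ) < (n ! : ℝ) := by exact_mod_cast Nat.factorial_pos n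
  have heq : Real.log ((2^n * n^(2*n) * n ! : ℕ) : ℝ)
      = n * Real.log 2 + (2*n) * Real.log n + Real.log (n ! : ℝ) := by
    push_cast
    rw [Real.log_mul (by positivity) hfacpos.ne', Real.log_mul (by positivity) (by positivity),
      Real.log_pow, Real.log_pow]
    push_cast
    ring
  rw [heq] at hlog
  have : 2 * (n:ℝ) * Real.log n = (2*n : ℕ) * Real.log n := by push_cast; ring
  linarith [hlog]

theorem stmt4 :
    StrictMonoOn
      (fun x : ℝ =>
        Real.log (Real.Gamma (1 + 3 * x)) - Real.log (Real.Gamma (1 + x)) - 2 * x * Real.log x)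
      (Set.Ioi (0 : ℝ)) := by
  have hmono : StrictMonoOn Ff (Set.Ioi (0:ℝ)) := by
    intro x hx y hy hxy
    simp only [Set.mem_Ioi] at hx hy
    -- find t > y with Ff y < Ff t
    have hlog2 : (0:ℝ) < Real.log 2 := Real.log_pos (by norm_num)
    obtain ⟨n, hn⟩ := exists_nat_gt (max (max 1 y) (Ff y / Real.log 2))
    have hn1R : (1:ℝ) < n := lt_of_le_of_lt (le_max_left 1 y |>.trans (le_max_left _ _)) hn
    have hn1 : 1 ≤ n := by exact_mod_cast hn1R.le
    have hyn : y < (n:ℝ) := lt_of_le_of_lt ((le_max_right 1 y).trans (le_max_left _ _)) hn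
    have hfy : Ff y < (n:ℝ) * Real.log 2 := by
      have hd : Ff y / Real.log 2 < (n:ℝ) := lt_of_le_of_lt (le_max_right _ _) hn
      exact (div_lt_iff₀ hlog2).mp hd
    have hft : Ff y < Ff n := lt_of_lt_of_le hfy (Ff_at_nat hn1)
    -- concavity argument
    set t : ℝ := (n:ℝ) with htdef
    have hxt : x < t := lt_trans hxy hyn
    have hd : (0:ℝ) < t - x := by linarith
    set a : ℝ := (t - y) / (t - x) with hadef
    set b : ℝ := (y - x) / (t - x) with hbdef
    have ha : 0 < a := div_pos (by linarith) hd
    have hb : 0 < b := div_pos (by linarith) hd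
    have hab : a + b = 1 := by
      rw [hadef, hbdef, ← add_div]
      rw [div_eq_one_iff_eq hd.ne']
      ring
    have hcomb : a • x + b • t = y := by
      simp only [smul_eq_mul, hadef, hbdef]
      field_simp
      ring
    have htmem : t ∈ Set.Ioi (0:ℝ) := by
      simp only [Set.mem_Ioi]; linarith
    have hcc := Ff_concave.2 (Set.mem_Ioi.mpr hx) htmem ha.le hb.le hab
    rw [hcomb] at hcc
    simp only [smul_eq_mul] at hcc
    have h1 : b * Ff y < b * Ff t := (mul_lt_mul_iff_right₀ hb).mpr hft
    have e : a * Ff y + b * Ff y = Ff y := by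
      have h := congrArg (fun r => r * Ff y) hab
      simp only [add_mul, one_mul] at h
      exact h
    have h3 : a * Ff x < a * Ff y := by linarith
    exact lt_of_mul_lt_mul_left h3 ha.le
  exact hmono
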